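/- Assume V ≠ 0, g is a nondegenerate symmetric bilinear form on V, and J : V → V is linear with J ∘ J = -id_V and g(J X, J Y) = g(X, Y) for all X, Y ∈ V; define ω(X, Y) := g(J X, Y). For real numbers a, b, c, the endomorphism 𝒥 := a 𝒥_{1,J} + b 𝒥_g + c 𝒥_ω satisfies 𝒥 ∘ 𝒥 = -id_E if and only if a² + b² + c² = 1; and in that case 𝒥 is strong (i.e. G₀(𝒥 u, v) = -G₀(u, 𝒥 v) for all u, v ∈ E) if and only if c = 1 or c = -1 (equivalently, if and only if a = 0 and b = 0). -/

import Mathlib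

noncomputable section

variable {V : Type*} [AddCommGroup V] [Module ℝ V] [FiniteDimensional ℝ V]

/-- The canonical pairing `G₀` on `E = V × V*`. -/
def Gz (u v : V × Module.Dual ℝ V) : ℝ := (u.2 v.1 + v.2 u.1) / 2

/-- The endomorphism `𝒥_{λ,J}` of `E = V × V*`, `𝒥_{λ,J}(X,ξ) = (J X, λ J* ξ)`. -/
def Jlam (lam : ℝ) (J : V →ₗ[ℝ] V) (u : V × Module.Dual ℝ V) : V × Module.Dual ℝ V :=
  (J u.1, lam • J.dualMap u.2)

/-- The musical isomorphism `♯_h = (♭_h)⁻¹` of a nondegenerate bilinear form `h`. -/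
def sharp (h : LinearMap.BilinForm ℝ V) (hh : LinearMap.BilinForm.Nondegenerate h) :
    Module.Dual ℝ V →ₗ[ℝ] V :=
  (LinearMap.BilinForm.toDual h hh).symm

/-- The endomorphism `𝒥_h` of `E = V × V*`, `𝒥_h(X,ξ) = (-♯_h ξ, ♭_h X)`. -/
def Jform (h : LinearMap.BilinForm ℝ V) (hh : LinearMap.BilinForm.Nondegenerate h)
    (u : V × Module.Dual ℝ V) : V × Module.Dual ℝ V :=
  (-(sharp h hh u.2), h u.1)

/-!
Write `♯ = ♯_g`. Because `ω = g(J·,·)` one has `♯_ω = -J ∘ ♯`, and `J`-invariance of `g` gives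
`♯ ∘ J* = -J ∘ ♯`; hence `𝒥(X, ξ) = (a J X - b ♯ξ + c J ♯ξ, a J*ξ + b ♭X + c ♭(J X))` and all cross
terms of `𝒥 ∘ 𝒥` cancel, leaving `-(a² + b² + c²) id`. Likewise symmetry of `g` and skewness of `J`
cancel the `c`-terms of `G₀(𝒥 u, v) + G₀(u, 𝒥 v)`, leaving
`a (ξ(J Y) + η(J X)) + b (g(X, Y) - ξ(♯η))`, which vanishes identically iff `a = b = 0`.
-/

theorem Function.bijective_of_apply_apply_eq_neg {α : Type*} [InvolutiveNeg α] {f : α → α}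
    (hf : ∀ x, f (f x) = -x) : Function.Bijective f :=
  ⟨fun x y hxy => neg_injective (by rw [← hf, ← hf, hxy]),
    fun y => ⟨f (-y), by rw [hf, neg_neg]⟩⟩

namespace LinearMap.BilinForm

variable {R M : Type*} [CommRing R] [AddCommGroup M] [Module R M]

theorem Nondegenerate.comp_of_bijective {B : LinearMap.BilinForm R M} (hB : B.Nondegenerate)
    {f : M →ₗ[R] M} (hf : Function.Bijective f) : (B ∘ₗ f).Nondegenerate := by
  refine ⟨fun x hx => hf.1 ?_, fun y hy => hB.2 y fun x => ?_⟩
  · rw [map_zero]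
    exact hB.1 (f x) hx
  · obtain ⟨x, rfl⟩ := hf.2 x
    exact hy x

theorem apply_apply_eq_neg_of_invariant {B : LinearMap.BilinForm R M} {J : M →ₗ[R] M}
    (hJ : ∀ X, J (J X) = -X) (hB : ∀ X Y, B (J X) (J Y) = B X Y) (X Y : M) :
    B X (J Y) = -B (J X) Y := by
  rw [← hB X (J Y), hJ, map_neg]

end LinearMap.BilinForm

open LinearMap.BilinForm

section Sharp

variable (h : LinearMap.BilinForm ℝ V) (hh : h.Nondegenerate)

@[simp]
theorem apply_sharp (ξ : Module.Dual ℝ V) (Y : V) : h (sharp h hh ξ) Y = ξ Y :=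
  apply_toDual_symm_apply ξ Y

theorem sharp_eq_iff {ξ : Module.Dual ℝ V} {X : V} : sharp h hh ξ = X ↔ ∀ Y, h X Y = ξ Y := by
  rw [sharp, LinearEquiv.coe_coe, LinearEquiv.symm_apply_eq, LinearMap.ext_iff]
  exact forall_congr' fun Y => eq_comm

@[simp]
theorem sharp_apply_self (X : V) : sharp h hh (h X) = X :=
  (sharp_eq_iff h hh).2 fun _ => rfl

variable {J : V →ₗ[ℝ] V}

theorem sharp_comp_eq_neg (hJ : ∀ X, J (J X) = -X) (hω : (h ∘ₗ J).Nondegenerate)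
    (ξ : Module.Dual ℝ V) :
    sharp (h ∘ₗ J) hω ξ = -J (sharp h hh ξ) :=
  (sharp_eq_iff _ _).2 fun Y => by simp [hJ]

theorem sharp_dualMap_eq_neg (hJ : ∀ X, J (J X) = -X) (hcompat : ∀ X Y, h (J X) (J Y) = h X Y)
    (ξ : Module.Dual ℝ V) :
    sharp h hh (J.dualMap ξ) = -J (sharp h hh ξ) :=
  (sharp_eq_iff h hh).2 fun Y => by
    rw [map_neg, LinearMap.neg_apply, ← apply_apply_eq_neg_of_invariant hJ hcompat,
      apply_sharp, LinearMap.dualMap_apply]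

end Sharp

def IsStrong (𝒥 : V × Module.Dual ℝ V → V × Module.Dual ℝ V) : Prop :=
  ∀ u v, Gz (𝒥 u) v = -Gz u (𝒥 v)

section SphericalCombination

variable (g : LinearMap.BilinForm ℝ V) (hg : g.Nondegenerate) (J : V →ₗ[ℝ] V)
  (hω : (g ∘ₗ J).Nondegenerate) (a b c : ℝ)

def sphericalCombination (w : V × Module.Dual ℝ V) : V × Module.Dual ℝ V :=
  a • Jlam 1 J w + b • Jform g hg w + c • Jform (g ∘ₗ J) hω w

variable {J}

theorem sphericalCombination_apply (hJ : ∀ X, J (J X) = -X) (X : V) (ξ : Module.Dual ℝ V) :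
    sphericalCombination g hg J hω a b c (X, ξ) =
      (a • J X - b • sharp g hg ξ + c • J (sharp g hg ξ),
        a • J.dualMap ξ + b • g X + c • g (J X)) := by
  simp [sphericalCombination, Jlam, Jform, sharp_comp_eq_neg g hg hJ, sub_eq_add_neg]

theorem sphericalCombination_apply_apply (hJ : ∀ X, J (J X) = -X)
    (hcompat : ∀ X Y, g (J X) (J Y) = g X Y) (u : V × Module.Dual ℝ V) :
    sphericalCombination g hg J hω a b c (sphericalCombination g hg J hω a b c u) =
      -((a ^ 2 + b ^ 2 + c ^ 2) • u) := by
  obtain ⟨X, ξ⟩ := u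
  simp only [sphericalCombination_apply g hg hω a b c hJ]
  refine Prod.ext ?_ (LinearMap.ext fun Y => ?_)
  · simp only [map_add, map_sub, map_smul, map_neg, hJ, sharp_apply_self,
      sharp_dualMap_eq_neg g hg hJ hcompat, Prod.fst_neg, Prod.smul_fst]
    module
  · have hskew := apply_apply_eq_neg_of_invariant hJ hcompat X Y
    simp only [map_add, map_sub, map_smul, map_neg, LinearMap.add_apply, LinearMap.sub_apply,
      LinearMap.smul_apply, LinearMap.neg_apply, LinearMap.dualMap_apply, hJ, hcompat,
      apply_sharp, Prod.snd_neg, Prod.smul_snd, smul_eq_mul]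
    linear_combination a * b * hskew

theorem Gz_sphericalCombination_add (hsym : ∀ X Y, g X Y = g Y X) (hJ : ∀ X, J (J X) = -X)
    (hcompat : ∀ X Y, g (J X) (J Y) = g X Y) (u v : V × Module.Dual ℝ V) :
    Gz (sphericalCombination g hg J hω a b c u) v + Gz u (sphericalCombination g hg J hω a b c v) =
      a * (u.2 (J v.1) + v.2 (J u.1)) + b * (g u.1 v.1 - u.2 (sharp g hg v.2)) := by
  obtain ⟨X, ξ⟩ := u
  obtain ⟨Y, η⟩ := v
  have hskew := apply_apply_eq_neg_of_invariant hJ hcompat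
  set s := sharp g hg
  have h1 : g (J Y) X = -g (J X) Y := by rw [hsym, hskew]
  have h2 : η (s ξ) = ξ (s η) := by rw [← apply_sharp g hg η, ← apply_sharp g hg ξ, hsym]
  have h3 : η (J (s ξ)) = -ξ (J (s η)) := by
    rw [← apply_sharp g hg η, ← apply_sharp g hg ξ, hskew, hsym (J (s η))]
  simp only [sphericalCombination_apply g hg hω a b c hJ, Gz, map_add, map_sub, map_smul,
    LinearMap.add_apply, LinearMap.smul_apply, LinearMap.dualMap_apply, smul_eq_mul]
  linear_combination (b / 2) * hsym Y X + (c / 2) * h1 - (b / 2) * h2 + (c / 2) * h3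

theorem sphericalCombination_apply_apply_eq_neg_iff [Nontrivial V] (hJ : ∀ X, J (J X) = -X)
    (hcompat : ∀ X Y, g (J X) (J Y) = g X Y) :
    (∀ u, sphericalCombination g hg J hω a b c (sphericalCombination g hg J hω a b c u) = -u) ↔
      a ^ 2 + b ^ 2 + c ^ 2 = 1 := by
  simp_rw [sphericalCombination_apply_apply g hg hω a b c hJ hcompat, neg_inj]
  refine ⟨fun h => ?_, fun h u => by rw [h, one_smul]⟩
  obtain ⟨u, hu⟩ := exists_ne (0 : V × Module.Dual ℝ V)
  exact smul_left_injective ℝ hu (by simpa using h u)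

theorem isStrong_sphericalCombination_iff [Nontrivial V] (hsym : ∀ X Y, g X Y = g Y X)
    (hJ : ∀ X, J (J X) = -X) (hcompat : ∀ X Y, g (J X) (J Y) = g X Y) :
    IsStrong (sphericalCombination g hg J hω a b c) ↔ a = 0 ∧ b = 0 := by
  simp_rw [IsStrong, eq_neg_iff_add_eq_zero,
    Gz_sphericalCombination_add g hg hω a b c hsym hJ hcompat]
  refine ⟨fun h => ?_, by rintro ⟨rfl, rfl⟩ u v; simp⟩
  obtain ⟨X, hX⟩ := exists_ne (0 : V)
  have hJX : J X ≠ 0 := fun h0 =>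
    hX ((injective_iff_map_eq_zero J).1 (Function.bijective_of_apply_apply_eq_neg hJ).1 X h0)
  obtain ⟨Y, hY⟩ := not_forall.1 (mt (hg.1 X) hX)
  obtain ⟨ξ, hξ⟩ := not_forall.1 (mt (Module.forall_dual_apply_eq_zero_iff ℝ (J X)).1 hJX)
  exact ⟨by simpa [hξ] using h (0, ξ) (X, 0), by simpa [hY] using h (X, 0) (Y, 0)⟩

end SphericalCombination

theorem eq_zero_and_eq_zero_iff_of_sq_add_sq_add_sq_eq_one {a b c : ℝ}
    (h : a ^ 2 + b ^ 2 + c ^ 2 = 1) : a = 0 ∧ b = 0 ↔ c = 1 ∨ c = -1 := by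
  have hc : c ^ 2 = 1 ↔ a ^ 2 + b ^ 2 = 0 := by constructor <;> intro <;> linarith
  rw [← sq_eq_one_iff, hc, add_eq_zero_iff_of_nonneg (sq_nonneg a) (sq_nonneg b),
    sq_eq_zero_iff, sq_eq_zero_iff]

/-- For `V ≠ 0` and an almost Hermitian structure `(g, J)` with `ω = g(J·,·)`, the combination
`𝒥 = a 𝒥_{1,J} + b 𝒥_g + c 𝒥_ω` squares to `-id` iff `a² + b² + c² = 1`; in that case it is
strong iff `c = ±1`, equivalently iff `a = 0 ∧ b = 0`. -/
theorem spherical_combination_weak_strong [Nontrivial V] (g : LinearMap.BilinForm ℝ V)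
    (hg : LinearMap.BilinForm.Nondegenerate g)
    (hsym : ∀ X Y : V, g X Y = g Y X)
    (J : V →ₗ[ℝ] V) (hJ : ∀ X : V, J (J X) = -X)
    (hcompat : ∀ X Y : V, g (J X) (J Y) = g X Y) (a b c : ℝ) :
    ∃ hω : LinearMap.BilinForm.Nondegenerate (g ∘ₗ J),
      let 𝒥 : (V × Module.Dual ℝ V) → (V × Module.Dual ℝ V) :=
        fun w => a • Jlam 1 J w + b • Jform g hg w + c • Jform (g ∘ₗ J) hω w
      ((∀ u : V × Module.Dual ℝ V, 𝒥 (𝒥 u) = -u) ↔ a ^ 2 + b ^ 2 + c ^ 2 = 1) ∧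
      (a ^ 2 + b ^ 2 + c ^ 2 = 1 →
        (((∀ u v : V × Module.Dual ℝ V, Gz (𝒥 u) v = -Gz u (𝒥 v)) ↔ (c = 1 ∨ c = -1)) ∧
         ((∀ u v : V × Module.Dual ℝ V, Gz (𝒥 u) v = -Gz u (𝒥 v)) ↔ (a = 0 ∧ b = 0)))) := by
  have hω := hg.comp_of_bijective (Function.bijective_of_apply_apply_eq_neg hJ)
  have hstrong := isStrong_sphericalCombination_iff g hg hω a b c hsym hJ hcompat
  exact ⟨hω, sphericalCombination_apply_apply_eq_neg_iff g hg hω a b c hJ hcompat,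
    fun h => ⟨hstrong.trans (eq_zero_and_eq_zero_iff_of_sq_add_sq_add_sq_eq_one h), hstrong⟩⟩

end
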